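/- arXiv:1801.08243 — 2 statements merged into one kernel-verified Lean document; each statement's English description precedes it below -/
import Mathlib

section
/- Let G be a finite simple graph, let M be the Gram matrix of a vector t-coloring of G (a feasible primal solution with objective value t), and let B be a feasible dual solution for χ_v(G) with objective value s = sum(B). Then tr(MB) = (t − s) + Σ (M_ij + 1)B_ij, where the sum is over ordered pairs (i,j) of adjacent vertices. Consequently, M and B are both optimal if and only if MB = 0 and B_ij = 0 whenever M_ij < −1. -/
open Matrix Kronecker

noncomputable section VectorColoring

variable {V α β : Type*}

/-- A vector `t`-coloring of a graph `G`: vectors `p i` with `p i ⬝ᵥ p i = t - 1`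
and `p i ⬝ᵥ p j ≤ -1` on edges. -/
def IsVecColoring [Fintype V] (G : SimpleGraph V) (t : ℝ) {d : ℕ}
    (p : V → Fin d → ℝ) : Prop :=
  (∀ i, p i ⬝ᵥ p i = t - 1) ∧ ∀ i j, G.Adj i j → p i ⬝ᵥ p j ≤ -1

/-- The vector chromatic number: the least `t ≥ 1` admitting a vector `t`-coloring. -/
def vecChrom [Fintype V] (G : SimpleGraph V) : ℝ :=
  sInf {t : ℝ | 1 ≤ t ∧ ∃ (d : ℕ) (p : V → Fin d → ℝ), IsVecColoring G t p}

/-- A strict vector `t`-coloring: `p i ⬝ᵥ p j = -1` on edges. -/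
def IsStrictVecColoring [Fintype V] (G : SimpleGraph V) (t : ℝ) {d : ℕ}
    (p : V → Fin d → ℝ) : Prop :=
  (∀ i, p i ⬝ᵥ p i = t - 1) ∧ ∀ i j, G.Adj i j → p i ⬝ᵥ p j = -1

/-- The strict vector chromatic number. -/
def strictVecChrom [Fintype V] (G : SimpleGraph V) : ℝ :=
  sInf {t : ℝ | 1 ≤ t ∧ ∃ (d : ℕ) (p : V → Fin d → ℝ), IsStrictVecColoring G t p}

/-- The Gram matrix of a family of vectors. -/
def gramMat {d : ℕ} (p : V → Fin d → ℝ) : Matrix V V ℝ :=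
  Matrix.of fun i j => p i ⬝ᵥ p j

/-- `M` is the Gram matrix of an optimal vector coloring of `G`. -/
def IsOptGram [Fintype V] (G : SimpleGraph V) (M : Matrix V V ℝ) : Prop :=
  ∃ (d : ℕ) (p : V → Fin d → ℝ), IsVecColoring G (vecChrom G) p ∧ M = gramMat p

/-- `grk G = rk(G)`: the maximum rank of the Gram matrix of an optimal vector coloring. -/
def grk [Fintype V] (G : SimpleGraph V) : ℕ :=
  sSup {r : ℕ | ∃ M : Matrix V V ℝ, IsOptGram G M ∧ M.rank = r}

/-- The categorical (tensor) product of graphs. -/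
def catProd (G : SimpleGraph α) (H : SimpleGraph β) : SimpleGraph (α × β) where
  Adj x y := G.Adj x.1 y.1 ∧ H.Adj x.2 y.2
  symm := by constructor; intro x y hxy; exact ⟨hxy.1.symm, hxy.2.symm⟩
  loopless := by constructor; intro x hx; exact G.loopless.irrefl x.1 hx.1

/-- A feasible dual solution for `vecChrom G`. -/
def IsDualSol [Fintype V] (G : SimpleGraph V) (B : Matrix V V ℝ) : Prop :=
  B.PosSemidef ∧ (∀ i j, i ≠ j → ¬ G.Adj i j → B i j = 0) ∧
    (∀ i j, 0 ≤ B i j) ∧ B.trace = 1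

/-- An optimal dual solution for `vecChrom G`: feasible with objective value `vecChrom G`. -/
def IsOptDual [Fintype V] (G : SimpleGraph V) (B : Matrix V V ℝ) : Prop :=
  IsDualSol G B ∧ (∑ i, ∑ j, B i j) = vecChrom G

/-- The all-ones matrix `J`. -/
def allOnes (γ : Type*) : Matrix γ γ ℝ :=
  Matrix.of fun _ _ => 1

/-- The graph `G(B)` of a (symmetric) matrix `B`: distinct `i, j` adjacent iff `B i j ≠ 0`. -/
def matGraph (B : Matrix V V ℝ) : SimpleGraph V where
  Adj i j := i ≠ j ∧ B i j ≠ 0 ∧ B j i ≠ 0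
  symm := by constructor; intro i j hij; exact ⟨hij.1.symm, hij.2.2, hij.2.1⟩
  loopless := by constructor; intro i hi; exact hi.1 rfl

/-- The spanning subgraph `G^p` of edges tight in the vector coloring `p`. -/
def tightSub [Fintype V] (G : SimpleGraph V) {d : ℕ} (p : V → Fin d → ℝ) :
    SimpleGraph V where
  Adj i j := G.Adj i j ∧ p i ⬝ᵥ p j = -1
  symm := by
    constructor
    intro i j hij
    exact ⟨hij.1.symm, by rw [dotProduct_comm]; exact hij.2⟩
  loopless := by constructor; intro i hi; exact G.loopless.irrefl i hi.1

/-- The skeleton `G^sk`: the spanning subgraph of edges tight in every optimal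
vector coloring. -/
def skeleton [Fintype V] (G : SimpleGraph V) : SimpleGraph V where
  Adj i j := G.Adj i j ∧ ∀ (d : ℕ) (p : V → Fin d → ℝ),
      IsVecColoring G (vecChrom G) p → p i ⬝ᵥ p j = -1
  symm := by
    constructor
    intro i j hij
    refine ⟨hij.1.symm, fun d p hp => ?_⟩
    rw [dotProduct_comm]
    exact hij.2 d p hp
  loopless := by constructor; intro i hi; exact G.loopless.irrefl i hi.1

/-- `i` is neighborly in the vector coloring `p`: `-p i` lies in the conical hull of
the vectors of the `∼_p`-neighbours of `i`. -/
def NeighborlyIn [Fintype V] (G : SimpleGraph V) {d : ℕ} (p : V → Fin d → ℝ)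
    (i : V) : Prop :=
  ∃ c : V → ℝ, (∀ j, 0 ≤ c j) ∧ (∀ j, c j ≠ 0 → G.Adj i j ∧ p i ⬝ᵥ p j = -1) ∧
    -p i = ∑ j, c j • p j

/-- `i` is neighborly: neighborly in every optimal vector coloring. -/
def Neighborly [Fintype V] (G : SimpleGraph V) (i : V) : Prop :=
  ∀ (d : ℕ) (p : V → Fin d → ℝ), IsVecColoring G (vecChrom G) p → NeighborlyIn G p i

/-- `i →_p j`: `-p i = ∑ α_l • p l` over `∼_p`-neighbours `l` of `i`, with `α_j > 0`. -/
def ArrowIn [Fintype V] (G : SimpleGraph V) {d : ℕ} (p : V → Fin d → ℝ)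
    (i j : V) : Prop :=
  ∃ c : V → ℝ, (∀ l, 0 ≤ c l) ∧ (∀ l, c l ≠ 0 → G.Adj i l ∧ p i ⬝ᵥ p l = -1) ∧
    0 < c j ∧ -p i = ∑ l, c l • p l

/-- `μ` is an eigenvalue of `M`. -/
def IsEigenvalue [Fintype V] (M : Matrix V V ℝ) (μ : ℝ) : Prop :=
  ∃ v : V → ℝ, v ≠ 0 ∧ M *ᵥ v = μ • v

/-- `lam` is the largest eigenvalue of `M`. -/
def IsMaxEigenvalue [Fintype V] (M : Matrix V V ℝ) (lam : ℝ) : Prop :=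
  IsGreatest {μ : ℝ | IsEigenvalue M μ} lam

/-- `lam` is the smallest eigenvalue of `M`. -/
def IsMinEigenvalue [Fintype V] (M : Matrix V V ℝ) (lam : ℝ) : Prop :=
  IsLeast {μ : ℝ | IsEigenvalue M μ} lam

/-- The eigenspace of `M` for `μ`. -/
def eigSpace [Fintype V] (M : Matrix V V ℝ) (μ : ℝ) : Submodule ℝ (V → ℝ) :=
  LinearMap.ker (M.mulVecLin - μ • (LinearMap.id : (V → ℝ) →ₗ[ℝ] V → ℝ))

/-- `W` is (the Gram matrix of) a convex combination of vector colorings of `G × H`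
induced by `G` and by `H`: `W = a • (M ⊗ J) + b • (J ⊗ N)`. -/
def IsConvexCombInduced [Fintype α] [Fintype β] (G : SimpleGraph α) (H : SimpleGraph β)
    (W : Matrix (α × β) (α × β) ℝ) : Prop :=
  ∃ (a b : ℝ) (M : Matrix α α ℝ) (N : Matrix β β ℝ),
    0 ≤ a ∧ 0 ≤ b ∧ a + b = 1 ∧ IsOptGram G M ∧ IsOptGram H N ∧
    W = a • (M ⊗ₖ allOnes β) + b • (allOnes α ⊗ₖ N)

end VectorColoring

/-!
Since `B` vanishes off the diagonal and the edges while `M + J` equals `t` on the diagonal,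
`tr (M B) = ∑ (M + J) ∘ B - s = t - s + ∑_{i ∼ j} (M i j + 1) B i j`. Here
`tr (M B) ≥ 0` for positive semidefinite `M`, `B`, and every edge term is `≤ 0`, so `s ≤ t` for
every feasible pair (weak duality) and hence `s ≤ χ_v(G) ≤ t`. Thus both are optimal iff
`t = s`, iff `tr (M B) = 0` and all edge terms vanish; for positive semidefinite matrices
`tr (M B) = 0` already forces `M B = 0`.
-/

namespace Matrix.PosSemidef

open scoped MatrixOrder ComplexOrder

variable {n 𝕜 : Type*} [Fintype n] [RCLike 𝕜] {A B : Matrix n n 𝕜}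

-- With `A = aᴴ a` and `B = bᴴ b`, cycling the trace gives `tr (A B) = tr (cᴴ c)` for `c = a bᴴ`,
-- while `A B = aᴴ c b`.
private lemma exists_trace_mul_eq (hA : A.PosSemidef) (hB : B.PosSemidef) :
    ∃ c : Matrix n n 𝕜, (A * B).trace = (cᴴ * c).trace ∧ (c = 0 → A * B = 0) := by
  classical
  obtain ⟨a, rfl⟩ := CStarAlgebra.nonneg_iff_eq_star_mul_self.mp hA.nonneg
  obtain ⟨b, rfl⟩ := CStarAlgebra.nonneg_iff_eq_star_mul_self.mp hB.nonneg
  simp only [star_eq_conjTranspose]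
  refine ⟨a * bᴴ, ?_, fun hc => ?_⟩
  · rw [conjTranspose_mul, conjTranspose_conjTranspose, ← Matrix.mul_assoc, trace_mul_comm]
    simp only [Matrix.mul_assoc]
  · rw [Matrix.mul_assoc, ← Matrix.mul_assoc a, hc, Matrix.zero_mul, Matrix.mul_zero]

theorem trace_mul_nonneg (hA : A.PosSemidef) (hB : B.PosSemidef) : 0 ≤ (A * B).trace := by
  obtain ⟨c, hc, -⟩ := exists_trace_mul_eq hA hB
  exact hc ▸ (posSemidef_conjTranspose_mul_self c).trace_nonneg

theorem trace_mul_eq_zero_iff (hA : A.PosSemidef) (hB : B.PosSemidef) :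
    (A * B).trace = 0 ↔ A * B = 0 := by
  obtain ⟨c, hc, hAB⟩ := exists_trace_mul_eq hA hB
  refine ⟨fun h => hAB (trace_conjTranspose_mul_self_eq_zero_iff.mp (hc ▸ h)), fun h => ?_⟩
  rw [h, trace_zero]

end Matrix.PosSemidef

section VectorColoringDuality

variable {V : Type*} {d : ℕ}

theorem gramMat_eq_mul_conjTranspose (p : V → Fin d → ℝ) : gramMat p = of p * (of p)ᴴ := by
  ext i j
  simp [gramMat, mul_apply, dotProduct]

variable [Fintype V] {G : SimpleGraph V} {B : Matrix V V ℝ} {t : ℝ} {p : V → Fin d → ℝ}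

theorem posSemidef_gramMat (p : V → Fin d → ℝ) : (gramMat p).PosSemidef :=
  gramMat_eq_mul_conjTranspose p ▸ posSemidef_self_mul_conjTranspose _

namespace IsDualSol

theorem symm (hB : IsDualSol G B) (i j : V) : B j i = B i j := by
  simpa using hB.1.isHermitian.apply i j

theorem one_le_sum (hB : IsDualSol G B) : 1 ≤ ∑ i, ∑ j, B i j := by
  calc (1 : ℝ) = ∑ i, B i i := hB.2.2.2.symm
    _ ≤ ∑ i, ∑ j, B i j := Finset.sum_le_sum fun i _ =>
      Finset.single_le_sum (fun j _ => hB.2.2.1 i j) (Finset.mem_univ i)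

variable [DecidableRel G.Adj]

theorem trace_mul_eq {M : Matrix V V ℝ} (hB : IsDualSol G B) (hM : ∀ i, M i i = t - 1) :
    (M * B).trace =
      (t - ∑ i, ∑ j, B i j) + ∑ i, ∑ j, (if G.Adj i j then (M i j + 1) * B i j else 0) := by
  classical
  have hterm : ∀ i j, (M i j + 1) * B i j =
      (if i = j then t * B i j else 0) + (if G.Adj i j then (M i j + 1) * B i j else 0) := by
    intro i j
    by_cases hij : i = j
    · subst hij
      simp [hM]
    · by_cases hadj : G.Adj i j
      · simp [hij, hadj]
      · simp [hij, hadj, hB.2.1 i j hij hadj]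
  have hdiag : ∑ i, ∑ j, (if i = j then t * B i j else 0) = t := by
    have htrace : ∑ i, B i i = 1 := hB.2.2.2
    simp [← Finset.mul_sum, htrace]
  calc (M * B).trace = ∑ i, ∑ j, M i j * B i j := by
        simp only [trace, diag, mul_apply, hB.symm]
    _ = ∑ i, ∑ j, ((if i = j then t * B i j else 0) +
          (if G.Adj i j then (M i j + 1) * B i j else 0) - B i j) := by
        refine Fintype.sum_congr _ _ fun i => Fintype.sum_congr _ _ fun j => ?_
        rw [← hterm]
        ring
    _ = _ := by
        simp only [Finset.sum_sub_distrib, Finset.sum_add_distrib, hdiag]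
        ring

end IsDualSol

namespace IsVecColoring

theorem gramMat_apply_le (hp : IsVecColoring G t p) {i j : V} (hadj : G.Adj i j) :
    gramMat p i j ≤ -1 :=
  hp.2 i j hadj

theorem vecChrom_le (hp : IsVecColoring G t p) (ht : 1 ≤ t) : vecChrom G ≤ t :=
  csInf_le ⟨1, fun _ hs => hs.1⟩ ⟨ht, d, p, hp⟩

variable [DecidableRel G.Adj]

theorem slack_nonpos (hp : IsVecColoring G t p) (hB : IsDualSol G B) (i j : V) :
    (if G.Adj i j then (gramMat p i j + 1) * B i j else 0) ≤ 0 := by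
  split_ifs with hadj
  · exact mul_nonpos_of_nonpos_of_nonneg (by linarith [hp.gramMat_apply_le hadj]) (hB.2.2.1 i j)
  · rfl

theorem slack_eq_zero_iff (hp : IsVecColoring G t p) (hB : IsDualSol G B) (i j : V) :
    (if G.Adj i j then (gramMat p i j + 1) * B i j else 0) = 0 ↔
      (gramMat p i j < -1 → B i j = 0) := by
  split_ifs with hadj
  · rw [mul_eq_zero, add_eq_zero_iff_eq_neg, (hp.gramMat_apply_le hadj).lt_iff_ne,
      imp_iff_not_or, not_not]
  · refine iff_of_true rfl fun hlt => ?_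
    by_cases hij : i = j
    · subst hij
      exact absurd hlt (by linarith [(posSemidef_gramMat p).diag_nonneg (i := i)])
    · exact hB.2.1 i j hij hadj

theorem slack_sum_nonpos (hp : IsVecColoring G t p) (hB : IsDualSol G B) :
    ∑ i, ∑ j, (if G.Adj i j then (gramMat p i j + 1) * B i j else 0) ≤ 0 :=
  Fintype.sum_nonpos fun i => Fintype.sum_nonpos fun j => hp.slack_nonpos hB i j

theorem slack_sum_eq_zero_iff (hp : IsVecColoring G t p) (hB : IsDualSol G B) :
    ∑ i, ∑ j, (if G.Adj i j then (gramMat p i j + 1) * B i j else 0) = 0 ↔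
      ∀ i j, gramMat p i j < -1 → B i j = 0 := by
  rw [Fintype.sum_eq_zero_iff_of_nonpos fun i => Fintype.sum_nonpos fun j =>
    hp.slack_nonpos hB i j]
  simp only [funext_iff, Pi.zero_apply, Fintype.sum_eq_zero_iff_of_nonpos fun j =>
    hp.slack_nonpos hB _ j, hp.slack_eq_zero_iff hB]

end IsVecColoring

namespace IsDualSol

variable [DecidableRel G.Adj]

theorem sum_le (hB : IsDualSol G B) (hp : IsVecColoring G t p) : ∑ i, ∑ j, B i j ≤ t := by
  linarith [hB.trace_mul_eq (M := gramMat p) hp.1, hp.slack_sum_nonpos hB,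
    (posSemidef_gramMat p).trace_mul_nonneg hB.1]

theorem sum_le_vecChrom (hB : IsDualSol G B) (hp : IsVecColoring G t p) :
    ∑ i, ∑ j, B i j ≤ vecChrom G :=
  le_csInf ⟨t, hB.one_le_sum.trans (hB.sum_le hp), d, p, hp⟩
    fun _ ⟨_, _, _, hp'⟩ => hB.sum_le hp'

end IsDualSol

end VectorColoringDuality

theorem complementary_slackness_general {V : Type*} [Fintype V]
    (G : SimpleGraph V) [DecidableRel G.Adj] (t : ℝ) (M B : Matrix V V ℝ)
    (hM : ∃ (d : ℕ) (p : V → Fin d → ℝ), IsVecColoring G t p ∧ M = gramMat p)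
    (hB : IsDualSol G B) :
    ((M * B).trace =
        (t - ∑ i, ∑ j, B i j) + ∑ i, ∑ j, (if G.Adj i j then (M i j + 1) * B i j else 0)) ∧
      ((t = vecChrom G ∧ (∑ i, ∑ j, B i j) = vecChrom G) ↔
        (M * B = 0 ∧ ∀ i j, M i j < -1 → B i j = 0)) := by
  obtain ⟨d, p, hp, rfl⟩ := hM
  have hgap := hB.trace_mul_eq (M := gramMat p) hp.1
  have htrace_nonneg := (posSemidef_gramMat p).trace_mul_nonneg hB.1
  have hslack_nonpos := hp.slack_sum_nonpos hB
  have hs_le := hB.sum_le_vecChrom hp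
  have ht_ge := hp.vecChrom_le (hB.one_le_sum.trans (hB.sum_le hp))
  refine ⟨hgap, ?_⟩
  rw [← (posSemidef_gramMat p).trace_mul_eq_zero_iff hB.1, ← hp.slack_sum_eq_zero_iff hB]
  constructor
  · rintro ⟨rfl, hs⟩
    constructor <;> linarith
  · rintro ⟨htrace, hslack⟩
    constructor <;> linarith

/-- Complementary slackness: if `M` is the Gram matrix of a vector
`t`-coloring of `G` and `B` is a feasible dual solution with objective value
`s = sum B`, then `tr(MB) = (t - s) + ∑_{i ∼ j} (M i j + 1) * B i j`; consequently
`M` and `B` are both optimal iff `MB = 0` and `B i j = 0` whenever `M i j < -1`. -/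
theorem complementary_slackness {V : Type*} [Fintype V] [DecidableEq V]
    (G : SimpleGraph V) [DecidableRel G.Adj] (t : ℝ) (M B : Matrix V V ℝ)
    (hM : ∃ (d : ℕ) (p : V → Fin d → ℝ), IsVecColoring G t p ∧ M = gramMat p)
    (hB : IsDualSol G B) :
    ((M * B).trace =
        (t - ∑ i, ∑ j, B i j) + ∑ i, ∑ j, (if G.Adj i j then (M i j + 1) * B i j else 0)) ∧
      ((t = vecChrom G ∧ (∑ i, ∑ j, B i j) = vecChrom G) ↔
        (M * B = 0 ∧ ∀ i j, M i j < -1 → B i j = 0)) :=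
  complementary_slackness_general G t M B hM hB
end

section
/- Let G and H be finite simple graphs, each with at least one edge, such that χ_v(G) = χ_v(H). If every optimal vector coloring of G × H is a convex combination of vector colorings induced by G and H, then the skeletons G^sk and H^sk are connected graphs. -/
open Matrix Kronecker

/-! If `G^sk` were disconnected, let `A` be the vertex set of one of its components. Take an
optimal coloring `p` of `G` that is strictly slack on every edge outside the skeleton (the
average of finitely many optimal colorings) and an optimal coloring `q` of `H`. Give `(i, l)`
the vector `p i ⊕ 0` if `i ∈ A` and `c • p i ⊕ s • q l` otherwise, where `c ^ 2 + s ^ 2 = 1` and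
`c < 1` is so close to `1` that the slack of the edges leaving `A` absorbs the loss. This is an
optimal coloring of `G × H`, yet for an edge `lk` of `H` the inner product at `(i, l), (i, k)`
jumps when `i` leaves `A`; in `a • (M ⊗ J) + b • (J ⊗ N)` that entry does not depend on `i`. -/

section WeightedAppend

variable {V : Type*}

lemma dotProduct_finAppend {m n : ℕ} (u v : Fin m → ℝ) (w x : Fin n → ℝ) :
    Fin.append u w ⬝ᵥ Fin.append v x = u ⬝ᵥ v + w ⬝ᵥ x := by
  simp only [dotProduct, Fin.sum_univ_add, Fin.append_left, Fin.append_right]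

def weightedAppend {d₁ d₂ : ℕ} (x y : V → ℝ) (p : V → Fin d₁ → ℝ) (q : V → Fin d₂ → ℝ) :
    V → Fin (d₁ + d₂) → ℝ :=
  fun i => Fin.append (x i • p i) (y i • q i)

lemma weightedAppend_dotProduct {d₁ d₂ : ℕ} (x y : V → ℝ) (p : V → Fin d₁ → ℝ)
    (q : V → Fin d₂ → ℝ) (i j : V) :
    weightedAppend x y p q i ⬝ᵥ weightedAppend x y p q j =
      x i * x j * (p i ⬝ᵥ p j) + y i * y j * (q i ⬝ᵥ q j) := by
  simp only [weightedAppend, dotProduct_finAppend, smul_dotProduct, dotProduct_smul, smul_eq_mul]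
  ring

end WeightedAppend

section VecColoring

variable {V : Type*} [Fintype V] {G : SimpleGraph V} {t : ℝ} {d : ℕ} {p : V → Fin d → ℝ}

lemma isVecColoring_weightedAppend {d₁ d₂ : ℕ} {p : V → Fin d₁ → ℝ} {q : V → Fin d₂ → ℝ}
    {x y : V → ℝ} (hp : ∀ i, p i ⬝ᵥ p i = t - 1) (hq : ∀ i, q i ⬝ᵥ q i = t - 1)
    (hxy : ∀ i, x i ^ 2 + y i ^ 2 = 1)
    (hadj : ∀ i j, G.Adj i j → x i * x j * (p i ⬝ᵥ p j) + y i * y j * (q i ⬝ᵥ q j) ≤ -1) :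
    IsVecColoring G t (weightedAppend x y p q) := by
  refine ⟨fun i => ?_, fun i j hij =>
    (weightedAppend_dotProduct x y p q i j).trans_le (hadj i j hij)⟩
  rw [weightedAppend_dotProduct, hp, hq]
  linear_combination (t - 1) * hxy i

lemma IsVecColoring.one_le [Nonempty V] (hp : IsVecColoring G t p) : 1 ≤ t := by
  obtain ⟨i⟩ := ‹Nonempty V›
  have : 0 ≤ p i ⬝ᵥ p i := Finset.sum_nonneg fun k _ => mul_self_nonneg (p i k)
  linarith [hp.1 i]

lemma IsVecColoring.abs_apply_le (hp : IsVecColoring G t p) (i : V) (k : Fin d) :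
    |p i k| ≤ t := by
  have hk : p i k * p i k ≤ p i ⬝ᵥ p i :=
    Finset.single_le_sum (fun l _ => mul_self_nonneg (p i l)) (Finset.mem_univ k)
  nlinarith [hp.1 i, abs_mul_abs_self (p i k), sq_nonneg (|p i k| - 1)]

lemma IsVecColoring.of_dotProduct_eq {d' : ℕ} {q : V → Fin d' → ℝ} (hp : IsVecColoring G t p)
    (hpq : ∀ i j, q i ⬝ᵥ q j = p i ⬝ᵥ p j) : IsVecColoring G t q :=
  ⟨fun i => (hpq i i).trans (hp.1 i), fun i j hij => (hpq i j).trans_le (hp.2 i j hij)⟩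

lemma exists_isVecColoring_card (G : SimpleGraph V) :
    ∃ p : V → Fin (Fintype.card V) → ℝ,
      IsVecColoring G ((Fintype.card V : ℝ) ^ 2 - Fintype.card V + 1) p := by
  classical
  set n := Fintype.card V
  set e := Fintype.equivFin V
  have hdot : ∀ i j, ((n : ℝ) • Pi.single (e i) 1 - 1 : Fin n → ℝ) ⬝ᵥ
      ((n : ℝ) • Pi.single (e j) 1 - 1) = (n : ℝ) ^ 2 * (if i = j then 1 else 0) - n := by
    intro i j
    simp only [sub_dotProduct, dotProduct_sub, smul_dotProduct, dotProduct_smul,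
      single_dotProduct, dotProduct_single, one_dotProduct_one, Pi.sub_apply, Pi.smul_apply,
      Pi.one_apply, Pi.single_apply, e.injective.eq_iff, eq_comm, smul_eq_mul, Fintype.card_fin]
    split_ifs <;> ring
  refine ⟨fun i => (n : ℝ) • Pi.single (e i) 1 - 1, fun i => ?_, fun i j hij => ?_⟩
  · rw [hdot, if_pos rfl]; ring
  · have : (1 : ℝ) ≤ n := by exact_mod_cast Fintype.card_pos_iff.2 ⟨i⟩
    rw [hdot, if_neg hij.ne]; linarith

lemma exists_fin_card_dotProduct_eq (p : V → Fin d → ℝ) :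
    ∃ q : V → Fin (Fintype.card V) → ℝ, ∀ i j, q i ⬝ᵥ q j = p i ⬝ᵥ p j := by
  classical
  open scoped MatrixOrder in
  obtain ⟨B, hB⟩ := CStarAlgebra.nonneg_iff_eq_star_mul_self.mp
    (posSemidef_self_mul_conjTranspose (Matrix.of p)).nonneg
  refine ⟨fun i k => B ((Fintype.equivFin V).symm k) i, fun i j => ?_⟩
  have := congrFun (congrFun hB i) j
  simp only [mul_apply, conjTranspose_apply, of_apply, star_trivial, star_eq_conjTranspose] at this
  rw [dotProduct, dotProduct, this]
  exact Fintype.sum_equiv _ _ _ fun _ => rfl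

lemma IsVecColoring.exists_fin_card (hp : IsVecColoring G t p) :
    ∃ q : V → Fin (Fintype.card V) → ℝ, IsVecColoring G t q :=
  (exists_fin_card_dotProduct_eq p).imp fun _ hq => hp.of_dotProduct_eq hq

lemma isClosed_setOf_isVecColoring (G : SimpleGraph V) (d : ℕ) :
    IsClosed {x : ℝ × (V → Fin d → ℝ) | IsVecColoring G x.1 x.2} := by
  simp only [IsVecColoring, Set.ofPred_and, Set.ofPred_forall]
  refine .inter (isClosed_iInter fun i => isClosed_eq (by fun_prop) (by fun_prop))
    (isClosed_iInter fun i => isClosed_iInter fun j => isClosed_iInter fun _ =>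
      isClosed_le (by fun_prop) continuous_const)

theorem exists_isVecColoring_vecChrom [Nonempty V] (G : SimpleGraph V) :
    ∃ p : V → Fin (Fintype.card V) → ℝ, IsVecColoring G (vecChrom G) p := by
  -- colorings can be taken in dimension `|V|`, so the infimum is a minimum over a compact set
  set n := Fintype.card V
  obtain ⟨p₀, hp₀⟩ := exists_isVecColoring_card G
  set t₀ : ℝ := (n : ℝ) ^ 2 - n + 1
  set K := {x : ℝ × (V → Fin n → ℝ) | x.1 ≤ t₀ ∧ IsVecColoring G x.1 x.2}
  have hK : IsCompact K := by
    refine ((isCompact_Icc (a := 1) (b := t₀)).prod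
      (isCompact_closedBall (0 : V → Fin n → ℝ) t₀)).of_isClosed_subset
      ((isClosed_le continuous_fst continuous_const).inter (isClosed_setOf_isVecColoring G n)) ?_
    rintro ⟨t, p⟩ ⟨ht, hp⟩
    have ht₀ : 0 ≤ t₀ := zero_le_one.trans (hp.one_le.trans ht)
    refine ⟨⟨hp.one_le, ht⟩, ?_⟩
    simp only [mem_closedBall_zero_iff, pi_norm_le_iff_of_nonneg ht₀, Real.norm_eq_abs]
    exact fun i k => (hp.abs_apply_le i k).trans ht
  obtain ⟨⟨t, p⟩, ⟨-, hp⟩, hmin⟩ :=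
    hK.exists_isMinOn ⟨(t₀, p₀), le_rfl, hp₀⟩ continuous_fst.continuousOn
  suffices t = vecChrom G from ⟨p, this ▸ hp⟩
  refine le_antisymm (le_csInf ⟨t₀, hp₀.one_le, n, p₀, hp₀⟩ ?_)
    (csInf_le ⟨1, fun s hs => hs.1⟩ ⟨hp.one_le, n, p, hp⟩)
  rintro s ⟨-, d, q, hq⟩
  obtain ⟨q', hq'⟩ := hq.exists_fin_card
  rcases le_total s t₀ with hs | hs
  · exact hmin (show (s, q') ∈ K from ⟨hs, hq'⟩)
  · exact (hmin (show (t₀, p₀) ∈ K from ⟨le_rfl, hp₀⟩)).trans hs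

lemma IsVecColoring.exists_midpoint {d' : ℕ} {q : V → Fin d' → ℝ} (hp : IsVecColoring G t p)
    (hq : IsVecColoring G t q) :
    ∃ (d'' : ℕ) (r : V → Fin d'' → ℝ), IsVecColoring G t r ∧
      ∀ i j, r i ⬝ᵥ r j = (p i ⬝ᵥ p j + q i ⬝ᵥ q j) / 2 := by
  have hc : √(1 / 2 : ℝ) * √(1 / 2) = 1 / 2 := Real.mul_self_sqrt (by norm_num)
  have hdot := weightedAppend_dotProduct (fun _ => √(1 / 2)) (fun _ => √(1 / 2)) p q
  refine ⟨_, _, isVecColoring_weightedAppend hp.1 hq.1 (fun _ => by rw [← sq] at hc; linarith)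
    fun i j hij => ?_, fun i j => by rw [hdot, hc]; ring⟩
  rw [hc]
  linarith [hp.2 i j hij, hq.2 i j hij]

lemma exists_isVecColoring_vecChrom_lt_of_not_skeleton_adj [Nonempty V] (G : SimpleGraph V)
    (i j : V) :
    ∃ (d : ℕ) (p : V → Fin d → ℝ), IsVecColoring G (vecChrom G) p ∧
      (G.Adj i j → ¬(skeleton G).Adj i j → p i ⬝ᵥ p j < -1) := by
  by_cases hij : G.Adj i j ∧ ¬(skeleton G).Adj i j
  · obtain ⟨d, p, hp, hne⟩ : ∃ (d : ℕ) (p : V → Fin d → ℝ),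
        IsVecColoring G (vecChrom G) p ∧ p i ⬝ᵥ p j ≠ -1 := by
      simpa [skeleton, hij.1] using hij.2
    exact ⟨d, p, hp, fun hadj _ => (hp.2 i j hadj).lt_of_ne hne⟩
  · obtain ⟨p, hp⟩ := exists_isVecColoring_vecChrom G
    exact ⟨_, p, hp, fun hadj hsk => absurd ⟨hadj, hsk⟩ hij⟩

theorem exists_isVecColoring_vecChrom_lt_of_not_skeleton [Nonempty V] (G : SimpleGraph V) :
    ∃ (d : ℕ) (p : V → Fin d → ℝ), IsVecColoring G (vecChrom G) p ∧
      ∀ i j, G.Adj i j → ¬(skeleton G).Adj i j → p i ⬝ᵥ p j < -1 := by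
  classical
  suffices ∀ s : Finset (V × V), ∃ (d : ℕ) (p : V → Fin d → ℝ), IsVecColoring G (vecChrom G) p ∧
      ∀ e ∈ s, G.Adj e.1 e.2 → ¬(skeleton G).Adj e.1 e.2 → p e.1 ⬝ᵥ p e.2 < -1 by
    obtain ⟨d, p, hp, hlt⟩ := this Finset.univ
    exact ⟨d, p, hp, fun i j => hlt (i, j) (Finset.mem_univ _)⟩
  intro s
  induction s using Finset.induction_on with
  | empty =>
    obtain ⟨p, hp⟩ := exists_isVecColoring_vecChrom G
    exact ⟨_, p, hp, by simp⟩
  | insert e s _ ih =>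
    obtain ⟨_, p, hp, hps⟩ := ih
    obtain ⟨_, q, hq, hqe⟩ := exists_isVecColoring_vecChrom_lt_of_not_skeleton_adj G e.1 e.2
    obtain ⟨_, r, hr, hdot⟩ := hp.exists_midpoint hq
    refine ⟨_, r, hr, fun e' he' hadj hsk => ?_⟩
    rw [hdot]
    rcases Finset.mem_insert.1 he' with rfl | he'
    · linarith [hp.2 _ _ hadj, hqe hadj hsk]
    · linarith [hps e' he' hadj hsk, hq.2 _ _ hadj]

end VecColoring

open Filter Topology in
lemma exists_pos_lt_one_forall_mul_le_neg_one {ι : Type*} [Finite ι] {P : ι → ℝ}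
    (hP : ∀ i, P i < -1) : ∃ c, 0 < c ∧ c < 1 ∧ ∀ i, c * P i ≤ -1 := by
  have h : ∀ᶠ c in 𝓝 (1 : ℝ), 0 < c ∧ ∀ i, c * P i < -1 := by
    refine (eventually_gt_nhds one_pos).and (eventually_all.2 fun i => ?_)
    have : Tendsto (fun c => c * P i) (𝓝 1) (𝓝 (P i)) := by
      simpa using (tendsto_id (x := 𝓝 (1 : ℝ))).mul_const (P i)
    exact this.eventually (eventually_lt_nhds (hP i))
  obtain ⟨c, ⟨hc₀, hc⟩, hc₁⟩ := ((h.filter_mono nhdsWithin_le_nhds).and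
    (self_mem_nhdsWithin : ∀ᶠ c in 𝓝[<] (1 : ℝ), c < 1)).exists
  exact ⟨c, hc₀, hc₁, fun i => (hc i).le⟩

section CatProd

variable {α β : Type*} [Fintype α] [Fintype β] {G : SimpleGraph α} {H : SimpleGraph β}

lemma IsVecColoring.catProd_swap {t : ℝ} {d : ℕ} {r : α × β → Fin d → ℝ}
    (hr : IsVecColoring (catProd G H) t r) : IsVecColoring (catProd H G) t (r ∘ Prod.swap) :=
  ⟨fun _ => hr.1 _, fun _ _ huv => hr.2 _ _ ⟨huv.2, huv.1⟩⟩

lemma vecChrom_catProd_comm (G : SimpleGraph α) (H : SimpleGraph β) :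
    vecChrom (catProd G H) = vecChrom (catProd H G) := by
  unfold vecChrom
  congr 1
  ext t
  constructor <;> rintro ⟨ht, d, r, hr⟩ <;> exact ⟨ht, d, _, hr.catProd_swap⟩

lemma IsOptGram.catProd_swap {W : Matrix (β × α) (β × α) ℝ} (hW : IsOptGram (catProd H G) W) :
    IsOptGram (catProd G H) (W.submatrix Prod.swap Prod.swap) := by
  obtain ⟨d, r, hr, rfl⟩ := hW
  rw [vecChrom_catProd_comm H G] at hr
  exact ⟨d, r ∘ Prod.swap, hr.catProd_swap, rfl⟩

lemma IsConvexCombInduced.of_submatrix_swap {W : Matrix (β × α) (β × α) ℝ}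
    (hW : IsConvexCombInduced G H (W.submatrix Prod.swap Prod.swap)) :
    IsConvexCombInduced H G W := by
  obtain ⟨a, b, M, N, ha, hb, hab, hM, hN, hWMN⟩ := hW
  refine ⟨b, a, N, M, hb, ha, by linarith, hN, hM, ?_⟩
  ext ⟨l, i⟩ ⟨k, j⟩
  have := congrFun (congrFun hWMN (i, l)) (j, k)
  simp only [submatrix_apply, Prod.swap_prod_mk, Matrix.add_apply, Matrix.smul_apply,
    kroneckerMap_apply, allOnes, of_apply, smul_eq_mul] at this ⊢
  linarith

lemma IsConvexCombInduced.apply_fst_eq {W : Matrix (α × β) (α × β) ℝ}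
    (hW : IsConvexCombInduced G H W) (i j : α) (l k : β) : W (i, l) (i, k) = W (j, l) (j, k) := by
  obtain ⟨a, b, M, N, -, -, -, ⟨d, p, hp, rfl⟩, -, rfl⟩ := hW
  simp [kroneckerMap_apply, allOnes, gramMat, hp.1]

lemma vecChrom_catProd_eq [Nonempty α] [Nonempty β] (h : vecChrom G = vecChrom H)
    (hcc : ∀ W : Matrix (α × β) (α × β) ℝ, IsOptGram (catProd G H) W →
      IsConvexCombInduced G H W) :
    vecChrom (catProd G H) = vecChrom G := by
  obtain ⟨r, hr⟩ := exists_isVecColoring_vecChrom (catProd G H)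
  obtain ⟨a, b, M, N, -, -, hab, ⟨d, p, hp, rfl⟩, ⟨d', q, hq, rfl⟩, hW⟩ :=
    hcc (gramMat r) ⟨_, r, hr, rfl⟩
  obtain ⟨i⟩ := ‹Nonempty α›
  obtain ⟨l⟩ := ‹Nonempty β›
  have := congrFun (congrFun hW (i, l)) (i, l)
  simp only [gramMat, Matrix.add_apply, Matrix.smul_apply, kroneckerMap_apply, allOnes, of_apply,
    smul_eq_mul, hr.1, hp.1, hq.1, ← h] at this
  linear_combination this + (vecChrom G - 1) * hab

lemma isVecColoring_catProd_cut {t c s : ℝ} {d₁ d₂ : ℕ} {p : α → Fin d₁ → ℝ}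
    {q : β → Fin d₂ → ℝ} (A : Set α) [DecidablePred (· ∈ A)] (hp : IsVecColoring G t p)
    (hq : IsVecColoring H t q) (hcs : c ^ 2 + s ^ 2 = 1)
    (hcross : ∀ i j, G.Adj i j → i ∈ A → j ∉ A → c * (p i ⬝ᵥ p j) ≤ -1) :
    IsVecColoring (catProd G H) t
      (weightedAppend (fun w => if w.1 ∈ A then 1 else c) (fun w => if w.1 ∈ A then 0 else s)
        (p ∘ Prod.fst) (q ∘ Prod.snd)) := by
  refine isVecColoring_weightedAppend (fun w => hp.1 w.1) (fun w => hq.1 w.2)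
    (fun w => by split_ifs <;> simp [hcs]) ?_
  rintro ⟨i, l⟩ ⟨j, k⟩ ⟨hij, hlk⟩
  have hP := hp.2 i j hij
  have hQ := hq.2 l k hlk
  by_cases hi : i ∈ A <;> by_cases hj : j ∈ A <;>
    simp only [Function.comp, hi, hj, if_true, if_false]
  · linarith
  · linarith [hcross i j hij hi hj]
  · linarith [dotProduct_comm (p i) (p j) ▸ hcross j i hij.symm hj hi]
  · nlinarith [mul_self_nonneg c, mul_self_nonneg s]

theorem preconnected_skeleton_of_forall_isConvexCombInduced [Nonempty α]
    (hH : ∃ l k, H.Adj l k) (h : vecChrom G = vecChrom H)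
    (hcc : ∀ W : Matrix (α × β) (α × β) ℝ, IsOptGram (catProd G H) W →
      IsConvexCombInduced G H W) :
    (skeleton G).Preconnected := by
  classical
  obtain ⟨l, k, hlk⟩ := hH
  have : Nonempty β := ⟨l⟩
  intro u v
  by_contra huv
  set A := {w | (skeleton G).Reachable u w}
  obtain ⟨_, p, hp, hslack⟩ := exists_isVecColoring_vecChrom_lt_of_not_skeleton G
  obtain ⟨q, hq⟩ := exists_isVecColoring_vecChrom H
  rw [← h] at hq
  obtain ⟨c, hc₀, hc₁, hc⟩ := exists_pos_lt_one_forall_mul_le_neg_one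
    (P := fun e : {e : α × α // G.Adj e.1 e.2 ∧ e.1 ∈ A ∧ e.2 ∉ A} => p e.1.1 ⬝ᵥ p e.1.2)
    fun ⟨⟨i, j⟩, hij, hi, hj⟩ => hslack i j hij fun hsk => hj (hi.trans hsk.reachable)
  have hs : √(1 - c ^ 2) ^ 2 = 1 - c ^ 2 := Real.sq_sqrt (by nlinarith)
  have hr := isVecColoring_catProd_cut A hp hq (by linarith [hs])
    fun i j hij hi hj => hc ⟨(i, j), hij, hi, hj⟩
  rw [← vecChrom_catProd_eq h hcc] at hr
  have key := (hcc _ ⟨_, _, hr, rfl⟩).apply_fst_eq u v l k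
  have hu : u ∈ A := SimpleGraph.Reachable.refl u
  have hv : v ∉ A := huv
  simp only [gramMat, of_apply, weightedAppend_dotProduct, Function.comp, hu, hv, if_true,
    if_false, hp.1, ← sq, hs] at key
  have hQ : q l ⬝ᵥ q k < vecChrom G - 1 := by linarith [hp.one_le, hq.2 l k hlk]
  nlinarith [mul_pos (by nlinarith : 0 < 1 - c ^ 2) (sub_pos.2 hQ)]

end CatProd

/-- If `χ_v(G) = χ_v(H)`, both graphs have an edge, and every optimal
vector coloring of `G × H` is a convex combination of vector colorings induced by the
factors, then the skeletons `G^sk` and `H^sk` are connected. -/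
theorem skeleton_connected_of_convex_comb {α β : Type*} [Fintype α] [Fintype β]
    (G : SimpleGraph α) (H : SimpleGraph β)
    (hG : ∃ a b, G.Adj a b) (hH : ∃ a b, H.Adj a b)
    (h : vecChrom G = vecChrom H)
    (hcc : ∀ W : Matrix (α × β) (α × β) ℝ, IsOptGram (catProd G H) W →
      IsConvexCombInduced G H W) :
    (skeleton G).Connected ∧ (skeleton H).Connected := by
  have : Nonempty α := hG.nonempty
  have : Nonempty β := hH.nonempty
  exact ⟨⟨preconnected_skeleton_of_forall_isConvexCombInduced hH h hcc⟩,
    ⟨preconnected_skeleton_of_forall_isConvexCombInduced hG h.symm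
      fun W hW => (hcc _ hW.catProd_swap).of_submatrix_swap⟩⟩
end
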